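/- arXiv:1106.2404 — 2 statements merged into one kernel-verified Lean document; each statement's English description precedes it below -/
import Mathlib

section
/- Let Y be generated from X by a partially invertible finite-dimensional dynamical system with memory parameters M and N. Then for every K > max{M, N}, the information loss over a length-K observation window satisfies H(X_1^K | Y_1^K) = H(X_1^{max{M,N}} | Y_1^K). -/
open MeasureTheory Filter

/-- Shannon entropy of a random variable `Z` (values in a countable set) under `μ`. -/
noncomputable def entropy {Ω S : Type*} [MeasurableSpace Ω] (μ : Measure Ω) (Z : Ω → S) : ℝ :=
  ∑' s : S, Real.negMulLog (μ (Z ⁻¹' {s})).toReal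

/-- Conditional Shannon entropy `H(Z | W) = H(Z, W) - H(W)`. -/
noncomputable def condEntropy {Ω S T : Type*} [MeasurableSpace Ω] (μ : Measure Ω)
    (Z : Ω → S) (W : Ω → T) : ℝ :=
  entropy μ (fun ω => (Z ω, W ω)) - entropy μ W

/-- The entropy of `Z` is finite (the defining series converges absolutely). -/
def HasFiniteEntropy {Ω S : Type*} [MeasurableSpace Ω] (μ : Measure Ω) (Z : Ω → S) : Prop :=
  Summable fun s : S => Real.negMulLog (μ (Z ⁻¹' {s})).toReal

/-- The window `(X_a, X_{a+1}, …, X_{a+n-1})` of a process, as a single random vector. -/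
def window {Ω S : Type*} (X : ℤ → Ω → S) (a : ℤ) (n : ℕ) : Ω → Fin n → S :=
  fun ω i => X (a + ((i : ℕ) : ℤ)) ω

/-- Joint (strict) stationarity of two processes on countable alphabets: the joint distribution
of any finite collection of samples is invariant under time shifts. -/
def JointlyStationary {Ω 𝒳 𝒴 : Type*} [MeasurableSpace Ω] (μ : Measure Ω)
    (X : ℤ → Ω → 𝒳) (Y : ℤ → Ω → 𝒴) : Prop :=
  ∀ (m : ℕ) (t : Fin m → ℤ) (k : ℤ) (x : Fin m → 𝒳) (y : Fin m → 𝒴),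
    μ {ω | ∀ i, X (t i) ω = x i ∧ Y (t i) ω = y i} =
      μ {ω | ∀ i, X (t i + k) ω = x i ∧ Y (t i + k) ω = y i}

/-- `Y` is generated from `X` by the finite-dimensional dynamical system with function `f`
and memory parameters `N` (inputs) and `M` (outputs):
`Y_n = f(X_{n-N}^n, Y_{n-M}^{n-1})` almost surely, for every `n`. -/
def IsDynamicalSystem {Ω 𝒳 𝒴 : Type*} [MeasurableSpace Ω] (μ : Measure Ω)
    (X : ℤ → Ω → 𝒳) (Y : ℤ → Ω → 𝒴) (N M : ℕ)
    (f : (Fin (N + 1) → 𝒳) → (Fin M → 𝒴) → 𝒴) : Prop :=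
  ∀ n : ℤ, ∀ᵐ ω ∂μ,
    Y n ω = f (fun k => X (n - (N : ℤ) + ((k : ℕ) : ℤ)) ω)
              (fun l => Y (n - (M : ℤ) + ((l : ℕ) : ℤ)) ω)

/-- `finv` is a partial inverse of the dynamical system:
`X_n = finv(X_{n-N}^{n-1}, Y_{n-M}^n)` almost surely, for every `n`. -/
def IsPartialInverse {Ω 𝒳 𝒴 : Type*} [MeasurableSpace Ω] (μ : Measure Ω)
    (X : ℤ → Ω → 𝒳) (Y : ℤ → Ω → 𝒴) (N M : ℕ)
    (finv : (Fin N → 𝒳) → (Fin (M + 1) → 𝒴) → 𝒳) : Prop :=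
  ∀ n : ℤ, ∀ᵐ ω ∂μ,
    X n ω = finv (fun k => X (n - (N : ℤ) + ((k : ℕ) : ℤ)) ω)
                 (fun l => Y (n - (M : ℤ) + ((l : ℕ) : ℤ)) ω)

/-- Extension of a length-`L` prefix of `X`-values to arbitrary indices, using the
partial inverse `finv` and the `Y`-values. -/
noncomputable def extX {𝒳 𝒴 : Type*} (N M L : ℕ) (hN : N ≤ L)
    (finv : (Fin N → 𝒳) → (Fin (M + 1) → 𝒴) → 𝒳)
    (x : Fin L → 𝒳) (y : ℕ → 𝒴) : ℕ → 𝒳 := fun i =>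
  if h : i < L then x ⟨i, h⟩
  else finv (fun k => extX N M L hN finv x y (i - N + (k : ℕ)))
            (fun l => y (i - M + (l : ℕ)))
termination_by i => i
decreasing_by
  have hk := k.isLt
  omega

/-- If `Z` and `W` are a.e. functions of each other, they have the same entropy. -/
lemma entropy_eq_of_ae_mutual {Ω S T : Type*} [MeasurableSpace Ω] (μ : Measure Ω)
    (Z : Ω → S) (W : Ω → T) (Φ : T → S) (Ψ : S → T)
    (hZW : ∀ᵐ ω ∂μ, Z ω = Φ (W ω)) (hWZ : ∀ᵐ ω ∂μ, W ω = Ψ (Z ω)) :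
    entropy μ Z = entropy μ W := by
  classical
  set A : Set Ω := {ω | Z ω = Φ (W ω) ∧ W ω = Ψ (Z ω)} with hAdef
  have hA0 : μ Aᶜ = 0 := by
    have h := hZW.and hWZ
    rw [ae_iff] at h
    exact h
  have hnonempty : ∀ (S' : Set Ω), μ S' ≠ 0 → (S' ∩ A).Nonempty := by
    intro S' hS'
    rw [Set.nonempty_iff_ne_empty]
    intro hemp
    apply hS'
    have hsub : S' ⊆ Aᶜ := by
      intro ω hω
      intro hωA
      exact Set.eq_empty_iff_forall_notMem.mp hemp ω ⟨hω, hωA⟩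
    exact measure_mono_null hsub hA0
  have hinterA : ∀ (S' : Set Ω), μ (S' ∩ A) = μ S' :=
    fun S' => measure_inter_conull hA0
  have claim1 : ∀ t, μ (W ⁻¹' {t}) ≠ 0 → Ψ (Φ t) = t := by
    intro t ht
    obtain ⟨ω, hω1, hω2⟩ := hnonempty _ ht
    have hw : W ω = t := hω1
    calc Ψ (Φ t) = Ψ (Φ (W ω)) := by rw [hw]
    _ = Ψ (Z ω) := by rw [← hω2.1]
    _ = W ω := (hω2.2).symm
    _ = t := hw
  have claim2 : ∀ t, μ (W ⁻¹' {t}) ≠ 0 → μ (Z ⁻¹' {Φ t}) = μ (W ⁻¹' {t}) := by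
    intro t ht
    have h1 : Z ⁻¹' {Φ t} ∩ A = W ⁻¹' {t} ∩ A := by
      ext ω
      simp only [Set.mem_inter_iff, Set.mem_preimage, Set.mem_singleton_iff]
      constructor
      · rintro ⟨hz, hA'⟩
        exact ⟨by rw [hA'.2, hz, claim1 t ht], hA'⟩
      · rintro ⟨hw, hA'⟩
        exact ⟨by rw [hA'.1, hw], hA'⟩
    rw [← hinterA (Z ⁻¹' {Φ t}), h1, hinterA]
  have claim3 : ∀ s, μ (Z ⁻¹' {s}) ≠ 0 → Φ (Ψ s) = s ∧ μ (W ⁻¹' {Ψ s}) ≠ 0 := by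
    intro s hs
    obtain ⟨ω, hω1, hω2⟩ := hnonempty _ hs
    have hz : Z ω = s := hω1
    have hw : W ω = Ψ s := by rw [hω2.2, hz]
    refine ⟨?_, ?_⟩
    · calc Φ (Ψ s) = Φ (W ω) := by rw [hw]
      _ = Z ω := (hω2.1).symm
      _ = s := hz
    · have hsub : Z ⁻¹' {s} ∩ A ⊆ W ⁻¹' {Ψ s} := by
        rintro ω' ⟨hω'1, hω'2⟩
        have : Z ω' = s := hω'1
        simp only [Set.mem_preimage, Set.mem_singleton_iff]
        rw [hω'2.2, this]
      intro h0
      have := measure_mono_null hsub h0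
      rw [hinterA] at this
      exact hs this
  unfold entropy
  have hsuppW : ∀ t : T,
      Real.negMulLog (μ (W ⁻¹' {t})).toReal ≠ 0 → μ (W ⁻¹' {t}) ≠ 0 := by
    intro t h h0
    rw [h0] at h
    simp [Real.negMulLog_zero] at h
  have hsuppZ : ∀ s : S,
      Real.negMulLog (μ (Z ⁻¹' {s})).toReal ≠ 0 → μ (Z ⁻¹' {s}) ≠ 0 := by
    intro s h h0
    rw [h0] at h
    simp [Real.negMulLog_zero] at h
  refine tsum_eq_tsum_of_ne_zero_bij (fun t => Φ t.1) ?_ ?_ ?_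
  · rintro ⟨t1, ht1⟩ ⟨t2, ht2⟩ h
    have h1 := claim1 t1 (hsuppW t1 ht1)
    have h2 := claim1 t2 (hsuppW t2 ht2)
    apply Subtype.ext
    simp only at h ⊢
    rw [← h1, ← h2, h]
  · intro s hs
    have hs' := hsuppZ s hs
    obtain ⟨hΦΨ, hW⟩ := claim3 s hs'
    refine ⟨⟨Ψ s, ?_⟩, hΦΨ⟩
    have hmeas : μ (Z ⁻¹' {s}) = μ (W ⁻¹' {Ψ s}) := by
      have := claim2 (Ψ s) hW
      rw [hΦΨ] at this
      exact this
    simp only [Function.mem_support]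
    rw [← hmeas]
    exact hs
  · rintro ⟨t, ht⟩
    simp only
    rw [claim2 t (hsuppW t ht)]

/-- If `Y` is generated from `X` by a partially invertible finite-dimensional dynamical
system with memory parameters `M`, `N`, then for every `K > max {M, N}`,
`H(X_1^K | Y_1^K) = H(X_1^{max{M,N}} | Y_1^K)`. -/
theorem partiallyInvertible_infoLoss_window {Ω 𝒳 𝒴 : Type*} [MeasurableSpace Ω]
    (μ : Measure Ω) [IsProbabilityMeasure μ] [Countable 𝒳] [Countable 𝒴]
    (X : ℤ → Ω → 𝒳) (Y : ℤ → Ω → 𝒴)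
    (hstat : JointlyStationary μ X Y)
    (N M : ℕ) (f : (Fin (N + 1) → 𝒳) → (Fin M → 𝒴) → 𝒴)
    (hsys : IsDynamicalSystem μ X Y N M f)
    (finv : (Fin N → 𝒳) → (Fin (M + 1) → 𝒴) → 𝒳)
    (hinv : IsPartialInverse μ X Y N M finv) :
    ∀ K : ℕ, max M N < K →
      condEntropy μ (window X 1 K) (window Y 1 K) =
        condEntropy μ (window X 1 (max M N)) (window Y 1 K) := by
  intro K hK
  set L : ℕ := max M N with hL
  have hN : N ≤ L := le_max_right M N
  have hM : M ≤ L := le_max_left M N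
  have hLK : L ≤ K := le_of_lt hK
  have hK0 : 0 < K := lt_of_le_of_lt (Nat.zero_le L) hK
  -- the reconstruction map
  set Φ : (Fin L → 𝒳) × (Fin K → 𝒴) → (Fin K → 𝒳) × (Fin K → 𝒴) :=
    fun p => (fun i => extX N M L hN finv p.1
      (fun j => p.2 ⟨j % K, Nat.mod_lt j hK0⟩) (i : ℕ), p.2) with hΦ
  set Ψ : (Fin K → 𝒳) × (Fin K → 𝒴) → (Fin L → 𝒳) × (Fin K → 𝒴) :=
    fun p => (fun i => p.1 (Fin.castLE hLK i), p.2) with hΨ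
  have key : ∀ᵐ ω ∂μ, ∀ i : ℕ, i < K →
      extX N M L hN finv (window X 1 L ω)
        (fun j => window Y 1 K ω ⟨j % K, Nat.mod_lt j hK0⟩) i = X (1 + (i : ℤ)) ω := by
    have h := ae_all_iff.mpr hinv
    filter_upwards [h] with ω hω
    intro i
    induction i using Nat.strong_induction_on with
    | _ i IH =>
      intro hiK
      rw [extX]
      by_cases hiL : i < L
      · rw [dif_pos hiL]
        rfl
      · rw [dif_neg hiL]
        have hi : L ≤ i := le_of_not_gt hiL
        have e1 : (fun k : Fin N =>
            extX N M L hN finv (window X 1 L ω)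
              (fun j => window Y 1 K ω ⟨j % K, Nat.mod_lt j hK0⟩) (i - N + (k : ℕ)))
            = (fun k : Fin N => X ((1 + (i : ℤ)) - (N : ℤ) + ((k : ℕ) : ℤ)) ω) := by
          funext k
          have hk := k.isLt
          rw [IH (i - N + (k : ℕ)) (by omega) (by omega)]
          congr 1
          omega
        have e2 : (fun l : Fin (M + 1) =>
            (fun j => window Y 1 K ω ⟨j % K, Nat.mod_lt j hK0⟩) (i - M + (l : ℕ)))
            = (fun l : Fin (M + 1) => Y ((1 + (i : ℤ)) - (M : ℤ) + ((l : ℕ) : ℤ)) ω) := by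
          funext l
          have hl := l.isLt
          simp only [window]
          have hmod : (i - M + (l : ℕ)) % K = i - M + (l : ℕ) :=
            Nat.mod_eq_of_lt (by omega)
          congr 1
          rw [hmod]
          omega
        rw [e1, e2, ← hω (1 + (i : ℤ))]
  have hent : entropy μ (fun ω => (window X 1 K ω, window Y 1 K ω))
      = entropy μ (fun ω => (window X 1 L ω, window Y 1 K ω)) := by
    apply entropy_eq_of_ae_mutual μ _ _ Φ Ψ
    · filter_upwards [key] with ω hω
      rw [hΦ]
      refine Prod.ext ?_ rfl
      funext i
      exact (hω i i.isLt).symm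
    · filter_upwards with ω
      rw [hΨ]
      refine Prod.ext ?_ rfl
      funext i
      rfl
  unfold condEntropy
  rw [hent]
end

section
/- Let X = (X_n)_{n∈ℤ} be a stationary process on a countable set 𝒳 with 0 ∉ 𝒳, where 𝒳 is contained in a field, and let Y_n = X_n · X_{n-1}, so that X and Y are jointly stationary. Then for every n ≥ 1, H(X_1^n | Y_1^n) = H(X_1 | Y_1^n); that is, the only information lost over any finite observation window is the information about the first input sample. -/
open MeasureTheory Filter

/-- If two random variables determine each other pointwise (they induce the same partition
of `Ω` into fibers), they have the same entropy. -/
lemma entropy_congr_of_same_fibers {Ω S T : Type*} [MeasurableSpace Ω] (μ : Measure Ω)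
    (Z : Ω → S) (W : Ω → T)
    (h : ∀ ω ω', Z ω = Z ω' ↔ W ω = W ω') :
    entropy μ Z = entropy μ W := by
  unfold entropy
  set f : S → ℝ := fun s => Real.negMulLog (μ (Z ⁻¹' {s})).toReal with hf
  set g : T → ℝ := fun t => Real.negMulLog (μ (W ⁻¹' {t})).toReal with hg
  have fiber : ∀ ω : Ω, Z ⁻¹' {Z ω} = W ⁻¹' {W ω} := by
    intro ω; ext ω'; simp only [Set.mem_preimage, Set.mem_singleton_iff]; exact h ω' ω
  have gzero : ∀ t : T, W ⁻¹' {t} = ∅ → g t = 0 := by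
    intro t ht; simp [hg, ht]
  have key : ∀ t : Function.support g, (W ⁻¹' {(t : T)}).Nonempty := by
    rintro ⟨t, ht⟩
    by_contra hne
    rw [Set.not_nonempty_iff_eq_empty] at hne
    exact ht (gzero t hne)
  apply tsum_eq_tsum_of_ne_zero_bij (fun t => Z (key t).choose)
  · rintro ⟨t, ht⟩ ⟨t', ht'⟩ hZ
    have hW : W (key ⟨t, ht⟩).choose = W (key ⟨t', ht'⟩).choose := (h _ _).mp hZ
    have e1 : W (key ⟨t, ht⟩).choose = t := (key ⟨t, ht⟩).choose_spec
    have e2 : W (key ⟨t', ht'⟩).choose = t' := (key ⟨t', ht'⟩).choose_spec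
    simpa [e1, e2] using hW
  · intro s hs
    have hμ : μ (Z ⁻¹' {s}) ≠ 0 := by
      intro hzero
      apply hs
      simp [hf, hzero]
    have hne : (Z ⁻¹' {s}).Nonempty := by
      by_contra hemp
      rw [Set.not_nonempty_iff_eq_empty] at hemp
      exact hμ (by simp [hemp])
    obtain ⟨ω, hω⟩ := hne
    have hωZ : Z ω = s := hω
    have hgW : g (W ω) ≠ 0 := by
      have : g (W ω) = f s := by
        simp only [hg, hf, ← fiber ω, hωZ]
      rw [this]; exact hs
    refine ⟨⟨W ω, hgW⟩, ?_⟩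
    have hc : W (key ⟨W ω, hgW⟩).choose = W ω := (key ⟨W ω, hgW⟩).choose_spec
    have : Z (key ⟨W ω, hgW⟩).choose = Z ω := (h _ _).mpr hc
    simp [this, hωZ]
  · rintro ⟨t, ht⟩
    have hc : W (key ⟨t, ht⟩).choose = t := (key ⟨t, ht⟩).choose_spec
    simp only [hf, hg, fiber (key ⟨t, ht⟩).choose, hc]

/-- **Multiplying consecutive inputs.** Let `X` be a stationary process taking values in a
countable subset `𝒳` of a field with `0 ∉ 𝒳`, and `Y_n = X_n · X_{n-1}` (so that `X` and
`Y` are jointly stationary). Then for every `n ≥ 1`,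
`H(X_1^n | Y_1^n) = H(X_1 | Y_1^n)`: only the first input sample is lost. -/
theorem mult_consecutive_inputs_loss {Ω F : Type*} [MeasurableSpace Ω] (μ : Measure Ω)
    [IsProbabilityMeasure μ] [Field F]
    (𝒳 : Set F) (hcount : 𝒳.Countable) (h0 : (0 : F) ∉ 𝒳)
    (X Y : ℤ → Ω → F)
    (hmem : ∀ (n : ℤ) (ω : Ω), X n ω ∈ 𝒳)
    (hY : ∀ (n : ℤ) (ω : Ω), Y n ω = X n ω * X (n - 1) ω)
    (hstat : JointlyStationary μ X Y) :
    ∀ n : ℕ, 1 ≤ n →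
      condEntropy μ (window X 1 n) (window Y 1 n) =
        condEntropy μ (X 1) (window Y 1 n) := by
  intro n hn
  unfold condEntropy
  congr 1
  apply entropy_congr_of_same_fibers
  intro ω ω'
  simp only [Prod.mk.injEq]
  constructor
  · rintro ⟨hX, hYeq⟩
    refine ⟨?_, hYeq⟩
    have := congrFun hX ⟨0, hn⟩
    simpa [window] using this
  · rintro ⟨hX1, hYeq⟩
    refine ⟨?_, hYeq⟩
    have hXall : ∀ i : ℕ, i < n → X (1 + (i : ℤ)) ω = X (1 + (i : ℤ)) ω' := by
      intro i
      induction i with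
      | zero => intro _; simpa using hX1
      | succ k ih =>
        intro hk
        have hkn : k < n := Nat.lt_of_succ_lt hk
        have hXk := ih hkn
        have hYk : Y (1 + ((k + 1 : ℕ) : ℤ)) ω = Y (1 + ((k + 1 : ℕ) : ℤ)) ω' := by
          have := congrFun hYeq ⟨k + 1, hk⟩
          simpa [window] using this
        have e1 := hY (1 + ((k + 1 : ℕ) : ℤ)) ω
        have e2 := hY (1 + ((k + 1 : ℕ) : ℤ)) ω'
        have harg : (1 : ℤ) + ((k + 1 : ℕ) : ℤ) - 1 = 1 + (k : ℤ) := by push_cast; ring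
        rw [harg] at e1 e2
        have hne : X (1 + (k : ℤ)) ω' ≠ 0 := fun hc => h0 (hc ▸ hmem _ ω')
        rw [e1, e2, hXk] at hYk
        exact mul_right_cancel₀ hne hYk
    funext i
    simp only [window]
    exact hXall i i.isLt
end
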